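/- Let m ≥ 1, k ≥ 0 and d_1,…,d_k ≥ 1 be integers, and let i ≥ 1 be an integer with d_1 + ⋯ + d_k + i < m + 1. Let p = ∏_{j=1}^{k} (1 − X^{d_j}) ∈ ℚ[[X]], and let H ∈ ℚ[T] be the Hilbert polynomial of p with respect to the exponent m+1, i.e. the unique polynomial such that H(s) equals the coefficient of X^s in p·(1 − X)^{−(m+1)} for all sufficiently large natural numbers s. Then H(−i) = 0. -/

import Mathlib

/-!
Since `p` is a polynomial of degree at most `D := d₁ + ⋯ + d_k`, `H` is Mathlib's
`hilbertPoly p (m + 1) = ∑ₑ pₑ · (T - e + 1)(T - e + 2)⋯(T - e + m) / m!`. At `T = -i` every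
summand has a vanishing factor, because `1 ≤ i + e ≤ i + D ≤ m` for each exponent `e` occurring in `p`.
-/

open PowerSeries

namespace Polynomial

variable {F : Type*} [Field F]

lemma preHilbertPoly_eval_natCast_sub_eq_zero {d k j : ℕ} (hj : 0 < j) (hjd : j ≤ d) :
    (preHilbertPoly F d k).eval ((k : F) - j) = 0 := by
  have hroot : (ascPochhammer F d).eval (-((j - 1 : ℕ) : F)) = 0 :=
    ascPochhammer_eval_neg_coe_nat_of_lt (by omega)
  rw [Nat.cast_sub (by omega), Nat.cast_one] at hroot
  simp only [preHilbertPoly, eval_smul, eval_comp, eval_add, eval_sub, eval_X, eval_C, eval_one]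
  rw [show (k : F) - j - k + 1 = -((j : F) - 1) by ring, hroot, smul_zero]

lemma hilbertPoly_succ_eval_neg_eq_zero (p : F[X]) {d i : ℕ} (hi : 0 < i)
    (hdeg : p.natDegree + i ≤ d) : (hilbertPoly p (d + 1)).eval (-(i : F)) = 0 := by
  rw [hilbertPoly_succ, eval_finsetSum]
  refine Finset.sum_eq_zero fun k hk => ?_
  have hk : k ≤ p.natDegree := le_natDegree_of_mem_supp k hk
  rw [eval_smul, show -(i : F) = (k : F) - (k + i : ℕ) by push_cast; ring,
    preHilbertPoly_eval_natCast_sub_eq_zero (by omega) (by omega), smul_zero]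

lemma natDegree_prod_one_sub_X_pow_le {ι : Type*} (s : Finset ι) (n : ι → ℕ) :
    (∏ j ∈ s, (1 - X ^ n j : F[X])).natDegree ≤ ∑ j ∈ s, n j :=
  (natDegree_prod_le _ _).trans <| Finset.sum_le_sum fun j _ =>
    (natDegree_sub_le _ _).trans (by simp)

end Polynomial

theorem stmt4_general (m k : ℕ) (d : Fin k → ℕ)
    (i : ℕ) (hi : 1 ≤ i) (hsum : (∑ j, d j) + i < m + 1)
    (p : ℚ⟦X⟧) (hp : p = ∏ j : Fin k, (1 - (PowerSeries.X : ℚ⟦X⟧) ^ (d j)))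
    (H : Polynomial ℚ)
    (hH : ∀ᶠ s : ℕ in Filter.atTop,
      H.eval (s : ℚ) =
        PowerSeries.coeff s (p * ((PowerSeries.invOneSubPow ℚ (m + 1) : (ℚ⟦X⟧)ˣ) : ℚ⟦X⟧))) :
    H.eval (-(i : ℚ)) = 0 := by
  set P : Polynomial ℚ := ∏ j : Fin k, (1 - Polynomial.X ^ d j) with hP
  have hpP : p = (P : ℚ⟦X⟧) := by
    rw [hp, hP, ← Polynomial.coeToPowerSeries.ringHom_apply, map_prod]
    simp [Polynomial.coeToPowerSeries.ringHom_apply]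
  obtain ⟨N, hN⟩ := Filter.eventually_atTop.1 hH
  have hHP : H = Polynomial.hilbertPoly P (m + 1) :=
    Polynomial.eq_hilbertPoly_of_forall_coeff_eq_eval N fun n hn => by rw [← hpP, hN n hn.le]
  rw [hHP]
  have hdeg : P.natDegree ≤ ∑ j, d j := Polynomial.natDegree_prod_one_sub_X_pow_le _ d
  exact Polynomial.hilbertPoly_succ_eval_neg_eq_zero P hi (by omega)

/-- First assertion of the Lemma in section 4: let `p = ∏ⱼ (1 - X^{dⱼ}) ∈ ℚ⟦X⟧` and let
`H ∈ ℚ[T]` be the Hilbert polynomial of `p` with respect to the exponent `m + 1`, i.e. the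
(unique) polynomial with `H(s) = coeff of X^s in p·(1-X)^{-(m+1)}` for all sufficiently
large `s`.  If `i ≥ 1` and `d₁ + ⋯ + d_k + i < m + 1`, then `H(-i) = 0`. -/
theorem stmt4 (m k : ℕ) (hm : 1 ≤ m) (d : Fin k → ℕ) (hd : ∀ j, 1 ≤ d j)
    (i : ℕ) (hi : 1 ≤ i) (hsum : (∑ j, d j) + i < m + 1)
    (p : ℚ⟦X⟧) (hp : p = ∏ j : Fin k, (1 - (PowerSeries.X : ℚ⟦X⟧) ^ (d j)))
    (H : Polynomial ℚ)
    (hH : ∀ᶠ s : ℕ in Filter.atTop,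
      H.eval (s : ℚ) =
        PowerSeries.coeff s (p * ((PowerSeries.invOneSubPow ℚ (m + 1) : (ℚ⟦X⟧)ˣ) : ℚ⟦X⟧))) :
    H.eval (-(i : ℚ)) = 0 :=
  stmt4_general m k d i hi hsum p hp H hH
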